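/- Let h₁, h₂ be continuous functions on positive definite real symmetric n×n matrices, each satisfying hᵢ(X^{1/2}·Y·X^{1/2}) = hᵢ(X) + hᵢ(Y) for all positive definite X, Y. Suppose the function f(X) = h₁(X) + h₂(I - X), defined for X positive definite with I - X positive definite, satisfies f(Q·X·Qᵀ) = f(X) for every orthogonal matrix Q and every such X. Then there exist κ₁, κ₂ ∈ ℝ with h₁(X) = κ₁ log det X and h₂(X) = κ₂ log det X for all positive definite X, hence f(X) = κ₁ log det X + κ₂ log det(I - X). -/

import Mathlib

/-!
A continuous logarithmic `h` is determined by its values on diagonal matrices: `t ↦ h(diag(eᵗ))` is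
a continuous additive function on `ℝⁿ`, hence linear, and when `h` is invariant under orthogonal
conjugation, conjugating by permutation matrices makes all its coefficients equal; the spectral
theorem then gives `h = κ log det`.

The invariance of `h₁` comes from the scaling law `h₁(cX) = h₁(cI) + h₁(X)`: invariance of `f` at
`cX` gives `h₁(QXQᵀ) - h₁(X) = h₂(I - cX) - h₂(I - cQXQᵀ)` for all small `c > 0`, and the right
side tends to `0` as `c → 0⁺` by continuity of `h₂` at `I`. Since `X ↦ I - X` commutes with
orthogonal conjugation, the same argument applies to `h₂`.
-/

open Matrix

open Classical in
/-- The unique positive semidefinite square root of a matrix (junk value `0`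
off the positive semidefinite cone). -/
noncomputable def msqrt {n : ℕ} (X : Matrix (Fin n) (Fin n) ℝ) : Matrix (Fin n) (Fin n) ℝ :=
  if h : X.PosSemidef then
    (h.1.eigenvectorUnitary : Matrix (Fin n) (Fin n) ℝ) *
      diagonal (fun i => Real.sqrt (h.1.eigenvalues i)) *
      (star h.1.eigenvectorUnitary : Matrix (Fin n) (Fin n) ℝ)
  else 0

open Filter Topology

namespace Matrix

variable {ι : Type*} [Fintype ι] [DecidableEq ι]

def IsOrthogonallyInvariantOn (f : Matrix ι ι ℝ → ℝ) (s : Set (Matrix ι ι ℝ)) : Prop :=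
  ∀ Q ∈ orthogonalGroup ι ℝ, ∀ X ∈ s, f (Q * X * Qᵀ) = f X

lemma PosDef.orthogonal_conj {Q X : Matrix ι ι ℝ} (hQ : Q ∈ orthogonalGroup ι ℝ)
    (hX : X.PosDef) : (Q * X * Qᵀ).PosDef := by
  have hU : IsUnit Q := (Unitary.toUnits ⟨Q, hQ⟩).isUnit
  simpa [star_eq_conjTranspose] using hU.posDef_star_right_conjugate_iff.mpr hX

lemma orthogonal_conj_one_sub {Q X : Matrix ι ι ℝ} (hQ : Q ∈ orthogonalGroup ι ℝ) :
    Q * (1 - X) * Qᵀ = 1 - Q * X * Qᵀ := by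
  rw [mul_sub, sub_mul, mul_one, (mem_orthogonalGroup_iff ι ℝ).mp hQ]

lemma permMatrix_mem_orthogonalGroup (σ : Equiv.Perm ι) :
    σ.permMatrix ℝ ∈ orthogonalGroup ι ℝ := by
  rw [mem_orthogonalGroup_iff, transpose_permMatrix, ← permMatrix_mul, inv_mul_cancel,
    permMatrix_one]

lemma permMatrix_mul_diagonal_mul_transpose (σ : Equiv.Perm ι) (d : ι → ℝ) :
    σ.permMatrix ℝ * diagonal d * (σ.permMatrix ℝ)ᵀ = diagonal (d ∘ σ) := by
  rw [transpose_permMatrix, Equiv.Perm.permMatrix, PEquiv.toMatrix_toPEquiv_mul,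
    Equiv.Perm.permMatrix, PEquiv.mul_toMatrix_toPEquiv]
  simp only [submatrix_submatrix, Function.comp_id]
  exact submatrix_diagonal_equiv d σ

lemma IsHermitian.eventually_posDef_one_sub_smul {X : Matrix ι ι ℝ} (hX : X.IsHermitian) :
    ∀ᶠ c in 𝓝 (0 : ℝ), (1 - c • X).PosDef := by
  have hconj : ∀ c : ℝ, 1 - c • X = Unitary.conjStarAlgAut ℝ _ hX.eigenvectorUnitary
      (diagonal fun i => 1 - c * hX.eigenvalues i) := by
    intro c
    set φ := Unitary.conjStarAlgAut ℝ (Matrix ι ι ℝ) hX.eigenvectorUnitary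
    calc 1 - c • X = φ 1 - c • φ (diagonal (RCLike.ofReal ∘ hX.eigenvalues)) := by
          rw [map_one, ← hX.spectral_theorem]
      _ = φ (diagonal fun i => 1 - c * hX.eigenvalues i) := by
          rw [← map_smul, ← map_sub, ← diagonal_one, ← diagonal_smul, diagonal_sub]
          rfl
  have hpos : ∀ i, ∀ᶠ c in 𝓝 (0 : ℝ), 0 < 1 - c * hX.eigenvalues i := fun i =>
    (((continuous_const.sub (continuous_id.mul continuous_const)).tendsto' 0 1
      (by simp)).eventually (lt_mem_nhds one_pos))
  filter_upwards [eventually_all.2 hpos] with c hc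
  rw [hconj, Unitary.conjStarAlgAut_apply, Unitary.isUnit_coe.posDef_star_right_conjugate_iff]
  exact posDef_diagonal_iff.2 hc

lemma IsOrthogonallyInvariantOn.add_one_sub_comm {h₁ h₂ : Matrix ι ι ℝ → ℝ}
    (hf : IsOrthogonallyInvariantOn (fun X => h₁ X + h₂ (1 - X)) {X | X.PosDef ∧ (1 - X).PosDef}) :
    IsOrthogonallyInvariantOn (fun X => h₂ X + h₁ (1 - X)) {X | X.PosDef ∧ (1 - X).PosDef} := by
  intro Q hQ X ⟨hX, hX'⟩
  have H := hf Q hQ (1 - X) ⟨hX', by rwa [sub_sub_cancel]⟩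
  simp only [orthogonal_conj_one_sub hQ, sub_sub_cancel] at H
  linarith

end Matrix

lemma exists_eq_mul_sum_of_additive_of_comp_perm {ι : Type*} [Fintype ι] [DecidableEq ι]
    {G : (ι → ℝ) → ℝ} (hG : Continuous G) (hadd : ∀ s t, G (s + t) = G s + G t)
    (hperm : ∀ (σ : Equiv.Perm ι) t, G (t ∘ σ) = G t) : ∃ κ, ∀ t, G t = κ * ∑ i, t i := by
  have hlin : ∀ t, G t = ∑ i, t i * G (Pi.single i 1) := fun t => by
    have H := ((AddMonoidHom.mk' G hadd).toRealLinearMap hG).toLinearMap.pi_apply_eq_sum_univ t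
    simp only [ContinuousLinearMap.coe_coe, smul_eq_mul] at H
    exact H.trans (Finset.sum_congr rfl fun i _ => congrArg (t i * G ·)
      (funext fun j => by simp [Pi.single_apply, eq_comm]))
  have hsingle : ∀ i j, G (Pi.single i 1) = G (Pi.single j 1) := fun i j => by
    rw [← hperm (Equiv.swap i j) (Pi.single i 1)]
    congr 1
    ext k
    simp [Pi.single_apply, Equiv.swap_apply_eq_iff]
  obtain ⟨κ, hκ⟩ : ∃ κ, ∀ i, G (Pi.single i 1) = κ := by
    rcases isEmpty_or_nonempty ι with _ | ⟨⟨i₀⟩⟩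
    · exact ⟨0, isEmptyElim⟩
    · exact ⟨_, fun i => hsingle i i₀⟩
  refine ⟨κ, fun t => ?_⟩
  rw [hlin, Finset.mul_sum]
  exact Finset.sum_congr rfl fun i _ => by rw [hκ, mul_comm]

section

variable {n : ℕ}

open scoped MatrixOrder in
lemma msqrt_eq_cfcSqrt {X : Matrix (Fin n) (Fin n) ℝ} (hX : X.PosSemidef) :
    msqrt X = CFC.sqrt X := by
  rw [msqrt, dif_pos hX, CFC.sqrt_eq_cfc, cfc_nnreal_eq_real _ X, hX.1.cfc_eq,
    IsHermitian.cfc, Unitary.conjStarAlgAut_apply]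
  congr 3
  funext i
  simp [hX.eigenvalues_nonneg i]

open scoped MatrixOrder in
lemma msqrt_diagonal {d : Fin n → ℝ} (hd : 0 ≤ d) :
    msqrt (diagonal d) = diagonal fun i => √(d i) := by
  rw [msqrt_eq_cfcSqrt (.diagonal hd)]
  refine CFC.sqrt_unique ?_ (nonneg_iff_posSemidef.mpr (.diagonal fun i => Real.sqrt_nonneg _))
  rw [diagonal_mul_diagonal]
  exact congrArg diagonal (funext fun i => Real.mul_self_sqrt (hd i))

lemma msqrt_smul_one {c : ℝ} (hc : 0 ≤ c) :
    msqrt (c • (1 : Matrix (Fin n) (Fin n) ℝ)) = √c • 1 := by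
  rw [smul_one_eq_diagonal, msqrt_diagonal fun _ => hc, smul_one_eq_diagonal]

def IsLogarithmic (h : Matrix (Fin n) (Fin n) ℝ → ℝ) : Prop :=
  ∀ X Y : Matrix (Fin n) (Fin n) ℝ, X.PosDef → Y.PosDef → h (msqrt X * Y * msqrt X) = h X + h Y

namespace IsLogarithmic

variable {h : Matrix (Fin n) (Fin n) ℝ → ℝ}

lemma map_diagonal_mul (hl : IsLogarithmic h) {d e : Fin n → ℝ} (hd : ∀ i, 0 < d i)
    (he : ∀ i, 0 < e i) : h (diagonal (d * e)) = h (diagonal d) + h (diagonal e) := by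
  have H := hl (diagonal d) (diagonal e) (.diagonal hd) (.diagonal he)
  rwa [msqrt_diagonal fun i => (hd i).le, diagonal_mul_diagonal, diagonal_mul_diagonal,
    show (fun i => √(d i) * e i * √(d i)) = d * e from funext fun i => by
      rw [mul_right_comm, Real.mul_self_sqrt (hd i).le]; rfl] at H

lemma map_smul (hl : IsLogarithmic h) {c : ℝ} (hc : 0 < c) {X : Matrix (Fin n) (Fin n) ℝ}
    (hX : X.PosDef) : h (c • X) = h (c • 1) + h X := by
  have H := hl (c • 1) X (PosDef.one.smul hc) hX
  rwa [msqrt_smul_one hc.le, smul_mul_assoc, one_mul, mul_smul_comm, mul_one, smul_smul,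
    Real.mul_self_sqrt hc.le] at H

lemma isOrthogonallyInvariantOn_of_add_one_sub {h₁ h₂ : Matrix (Fin n) (Fin n) ℝ → ℝ}
    (hl : IsLogarithmic h₁) (hc : ContinuousWithinAt h₂ {X | X.PosDef} 1)
    (hf : IsOrthogonallyInvariantOn (fun X => h₁ X + h₂ (1 - X)) {X | X.PosDef ∧ (1 - X).PosDef}) :
    IsOrthogonallyInvariantOn h₁ {X | X.PosDef} := by
  intro Q hQ X (hX : X.PosDef)
  set Y := Q * X * Qᵀ
  have hY : Y.PosDef := hX.orthogonal_conj hQ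
  have hlim : ∀ {Z : Matrix (Fin n) (Fin n) ℝ}, Z.IsHermitian →
      Tendsto (fun c : ℝ => h₂ (1 - c • Z)) (𝓝[>] 0) (𝓝 (h₂ 1)) := fun {Z} hZ =>
    (hc.tendsto.comp (tendsto_nhdsWithin_iff.2
      ⟨(by fun_prop : Continuous fun c : ℝ => 1 - c • Z).tendsto' 0 1 (by simp),
        hZ.eventually_posDef_one_sub_smul⟩)).mono_left nhdsWithin_le_nhds
  have hdiff : ∀ᶠ c in 𝓝[>] (0 : ℝ), h₂ (1 - c • X) - h₂ (1 - c • Y) = h₁ Y - h₁ X := by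
    filter_upwards [self_mem_nhdsWithin,
      nhdsWithin_le_nhds hX.1.eventually_posDef_one_sub_smul] with c (hc0 : 0 < c) hcX
    have H := hf Q hQ (c • X) ⟨hX.smul hc0, hcX⟩
    simp only [mul_smul_comm, smul_mul_assoc] at H
    rw [hl.map_smul hc0 hY, hl.map_smul hc0 hX] at H
    linarith
  have hzero := tendsto_nhds_unique (((hlim hX.1).sub (hlim hY.1)).congr' hdiff)
    tendsto_const_nhds
  linarith

lemma exists_diagonal_eq_mul_log_prod (hl : IsLogarithmic h)
    (hc : ContinuousOn h {X | X.PosDef}) (hK : IsOrthogonallyInvariantOn h {X | X.PosDef}) :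
    ∃ κ, ∀ d : Fin n → ℝ, (∀ i, 0 < d i) → h (diagonal d) = κ * Real.log (∏ i, d i) := by
  set G : (Fin n → ℝ) → ℝ := fun t => h (diagonal (Real.exp ∘ t))
  have hpos (t : Fin n → ℝ) : ∀ i, 0 < (Real.exp ∘ t) i := fun i => Real.exp_pos _
  have hG : Continuous G :=
    hc.comp_continuous (by fun_prop) fun t => PosDef.diagonal (hpos t)
  have hadd (s t : Fin n → ℝ) : G (s + t) = G s + G t := by
    show h (diagonal _) = h (diagonal _) + h (diagonal _)
    rw [← hl.map_diagonal_mul (hpos s) (hpos t)]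
    congr 2
    ext i
    simp [Real.exp_add]
  have hperm (σ : Equiv.Perm (Fin n)) (t : Fin n → ℝ) : G (t ∘ σ) = G t := by
    show h (diagonal _) = h (diagonal _)
    rw [← hK _ (permMatrix_mem_orthogonalGroup σ) _ (PosDef.diagonal (hpos t)),
      permMatrix_mul_diagonal_mul_transpose]
    rfl
  obtain ⟨κ, hκ⟩ := exists_eq_mul_sum_of_additive_of_comp_perm hG hadd hperm
  refine ⟨κ, fun d hd => ?_⟩
  have hd' : Real.exp ∘ (Real.log ∘ d) = d := funext fun i => Real.exp_log (hd i)
  rw [Real.log_prod fun i _ => (hd i).ne', ← hκ]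
  conv_lhs => rw [← hd']
  rfl

lemma exists_eq_mul_log_det (hl : IsLogarithmic h) (hc : ContinuousOn h {X | X.PosDef})
    (hK : IsOrthogonallyInvariantOn h {X | X.PosDef}) :
    ∃ κ, ∀ X : Matrix (Fin n) (Fin n) ℝ, X.PosDef → h X = κ * Real.log X.det := by
  obtain ⟨κ, hκ⟩ := hl.exists_diagonal_eq_mul_log_prod hc hK
  refine ⟨κ, fun X hX => ?_⟩
  set U := hX.1.eigenvectorUnitary
  have hXU : X = U * diagonal hX.1.eigenvalues * (U : Matrix (Fin n) (Fin n) ℝ)ᵀ := by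
    have := hX.1.spectral_theorem
    rw [Unitary.conjStarAlgAut_apply] at this
    simpa [star_eq_conjTranspose] using this
  rw [hXU, hK _ U.2 _ (PosDef.diagonal hX.eigenvalues_pos), hκ _ hX.eigenvalues_pos, ← hXU]
  simp [hX.1.det_eq_prod_eigenvalues]

end IsLogarithmic

end

/-- K-invariance lemma: if `h₁, h₂` are continuous `w₁`-logarithmic and
`X ↦ h₁(X) + h₂(I - X)` is invariant under orthogonal conjugation, then both
are multiples of `log det`. -/
theorem K_invariant_logarithmic (n : ℕ)
    (h₁ h₂ : Matrix (Fin n) (Fin n) ℝ → ℝ)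
    (hc₁ : ContinuousOn h₁ {X | X.PosDef}) (hc₂ : ContinuousOn h₂ {X | X.PosDef})
    (hl₁ : ∀ X Y : Matrix (Fin n) (Fin n) ℝ, X.PosDef → Y.PosDef →
      h₁ (msqrt X * Y * msqrt X) = h₁ X + h₁ Y)
    (hl₂ : ∀ X Y : Matrix (Fin n) (Fin n) ℝ, X.PosDef → Y.PosDef →
      h₂ (msqrt X * Y * msqrt X) = h₂ X + h₂ Y)
    (hinv : ∀ Q : Matrix (Fin n) (Fin n) ℝ, Q * Qᵀ = 1 → Qᵀ * Q = 1 →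
      ∀ X : Matrix (Fin n) (Fin n) ℝ, X.PosDef → (1 - X).PosDef →
        h₁ (Q * X * Qᵀ) + h₂ (1 - Q * X * Qᵀ) = h₁ X + h₂ (1 - X)) :
    ∃ κ₁ κ₂ : ℝ, (∀ X : Matrix (Fin n) (Fin n) ℝ, X.PosDef →
      h₁ X = κ₁ * Real.log X.det ∧ h₂ X = κ₂ * Real.log X.det) ∧
      ∀ X : Matrix (Fin n) (Fin n) ℝ, X.PosDef → (1 - X).PosDef →
        h₁ X + h₂ (1 - X) = κ₁ * Real.log X.det + κ₂ * Real.log (1 - X).det := by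
  have hf : IsOrthogonallyInvariantOn (fun X => h₁ X + h₂ (1 - X))
      {X | X.PosDef ∧ (1 - X).PosDef} :=
    fun Q hQ X hX => hinv Q ((mem_orthogonalGroup_iff _ ℝ).mp hQ)
      ((mem_orthogonalGroup_iff' _ ℝ).mp hQ) X hX.1 hX.2
  obtain ⟨κ₁, hκ₁⟩ := IsLogarithmic.exists_eq_mul_log_det hl₁ hc₁
    (IsLogarithmic.isOrthogonallyInvariantOn_of_add_one_sub hl₁ (hc₂ 1 .one) hf)
  obtain ⟨κ₂, hκ₂⟩ := IsLogarithmic.exists_eq_mul_log_det hl₂ hc₂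
    (IsLogarithmic.isOrthogonallyInvariantOn_of_add_one_sub hl₂ (hc₁ 1 .one) hf.add_one_sub_comm)
  exact ⟨κ₁, κ₂, fun X hX => ⟨hκ₁ X hX, hκ₂ X hX⟩,
    fun X hX hX' => by rw [hκ₁ X hX, hκ₂ _ hX']⟩
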